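/- arXiv:2501.11903 — 4 statements merged into one kernel-verified Lean document; each statement's English description precedes it below -/
import Mathlib

section
/- Let $n, m$ be positive integers, $J, R, Q \in \mathbb{R}^{n \times n}$ with $J^\top = -J$ and $Q$ symmetric positive definite, $F, P \in \mathbb{R}^{n \times m}$, and $D \in \mathbb{R}^{m \times m}$. If the matrix $K_s = \begin{pmatrix} 2R & -(F-P) & -(F+P) \\ -(F-P)^\top & I_m & -D^\top \\ -(F+P)^\top & -D & I_m \end{pmatrix}$ is positive definite, then with $A = (J-R)Q$, $B = F-P$, $C = (F+P)^\top Q$, the matrix $X = Q$ is a positive definite solution of the strict bounded-real LMI, i.e., $\begin{pmatrix} A^\top X + XA & XB & C^\top \\ B^\top X & -I_m & D^\top \\ C & D & -I_m \end{pmatrix} \prec 0$. -/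
open Matrix

/-- 3x3 block matrix with block sizes n, m, m. -/
def blk3 (n m : ℕ) (M11 : Matrix (Fin n) (Fin n) ℝ) (M12 M13 : Matrix (Fin n) (Fin m) ℝ)
    (M21 M31 : Matrix (Fin m) (Fin n) ℝ) (M22 M23 M32 M33 : Matrix (Fin m) (Fin m) ℝ) :
    Matrix (Fin n ⊕ (Fin m ⊕ Fin m)) (Fin n ⊕ (Fin m ⊕ Fin m)) ℝ :=
  Matrix.fromBlocks M11 (Matrix.fromCols M12 M13) (Matrix.fromRows M21 M31)
    (Matrix.fromBlocks M22 M23 M32 M33)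

/-- The scattering pH matrix K_s. -/
def Ksmat (n m : ℕ) (R : Matrix (Fin n) (Fin n) ℝ) (F P : Matrix (Fin n) (Fin m) ℝ)
    (D : Matrix (Fin m) (Fin m) ℝ) :
    Matrix (Fin n ⊕ (Fin m ⊕ Fin m)) (Fin n ⊕ (Fin m ⊕ Fin m)) ℝ :=
  blk3 n m ((2 : ℝ) • R) (-(F - P)) (-(F + P)) (-(F - P)ᵀ) (-(F + P)ᵀ) 1 (-Dᵀ) (-D) 1

/-- The bounded-real LMI matrix. -/
def BRmat (n m : ℕ) (A : Matrix (Fin n) (Fin n) ℝ) (B : Matrix (Fin n) (Fin m) ℝ)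
    (C : Matrix (Fin m) (Fin n) ℝ) (D : Matrix (Fin m) (Fin m) ℝ)
    (X : Matrix (Fin n) (Fin n) ℝ) :
    Matrix (Fin n ⊕ (Fin m ⊕ Fin m)) (Fin n ⊕ (Fin m ⊕ Fin m)) ℝ :=
  blk3 n m (Aᵀ * X + X * A) (X * B) Cᵀ (Bᵀ * X) C (-1) Dᵀ D (-1)

/-!
With `T = diag(Q, I, I)` one has `-BR = Tᵀ K_s T`: the only nontrivial block is the top-left one,
where skew-symmetry of `J` gives `AᵀQ + QA = -2 QRQ` for `A = (J - R)Q` (`R` is symmetric because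
`K_s` is). Congruence by the invertible `T` preserves positive definiteness.
-/

section blk3

variable {n m : ℕ} (M11 : Matrix (Fin n) (Fin n) ℝ) (M12 M13 : Matrix (Fin n) (Fin m) ℝ)
    (M21 M31 : Matrix (Fin m) (Fin n) ℝ) (M22 M23 M32 M33 : Matrix (Fin m) (Fin m) ℝ)

theorem neg_blk3 :
    -blk3 n m M11 M12 M13 M21 M31 M22 M23 M32 M33 =
      blk3 n m (-M11) (-M12) (-M13) (-M21) (-M31) (-M22) (-M23) (-M32) (-M33) := by
  simp only [blk3, fromBlocks_neg, fromCols_neg, fromRows_neg]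

theorem transpose_mul_blk3_mul (X : Matrix (Fin n) (Fin n) ℝ) :
    (fromBlocks X 0 0 1)ᵀ * blk3 n m M11 M12 M13 M21 M31 M22 M23 M32 M33 * fromBlocks X 0 0 1 =
      blk3 n m (Xᵀ * M11 * X) (Xᵀ * M12) (Xᵀ * M13) (M21 * X) (M31 * X) M22 M23 M32 M33 := by
  rw [blk3, fromBlocks_transpose, transpose_zero, transpose_zero, transpose_one,
    fromBlocks_multiply, fromBlocks_multiply]
  simp only [mul_fromCols, fromRows_mul, Matrix.mul_zero, Matrix.zero_mul, Matrix.mul_one,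
    Matrix.one_mul, add_zero, zero_add, blk3]

end blk3

theorem transpose_mul_add_mul_eq_neg_conj {n : ℕ} {J R Q : Matrix (Fin n) (Fin n) ℝ}
    (hJ : Jᵀ = -J) (hR : Rᵀ = R) (hQ : Qᵀ = Q) :
    ((J - R) * Q)ᵀ * Q + Q * ((J - R) * Q) = -(Qᵀ * ((2 : ℝ) • R) * Q) := by
  rw [transpose_mul, transpose_sub, hJ, hR, hQ, Matrix.mul_smul, Matrix.smul_mul, two_smul]
  noncomm_ring

theorem neg_BRmat_eq_conj_Ksmat {n m : ℕ} {J R Q : Matrix (Fin n) (Fin n) ℝ}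
    (F P : Matrix (Fin n) (Fin m) ℝ) (D : Matrix (Fin m) (Fin m) ℝ)
    (hJ : Jᵀ = -J) (hR : Rᵀ = R) (hQ : Qᵀ = Q) :
    -BRmat n m ((J - R) * Q) (F - P) ((F + P)ᵀ * Q) D Q =
      (fromBlocks Q 0 0 1)ᵀ * Ksmat n m R F P D * fromBlocks Q 0 0 1 := by
  rw [BRmat, neg_blk3, Ksmat, transpose_mul_blk3_mul,
    transpose_mul_add_mul_eq_neg_conj hJ hR hQ, neg_neg]
  simp only [transpose_mul, transpose_transpose, hQ, Matrix.mul_neg, Matrix.neg_mul, neg_neg]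

theorem stmt0_general (n m : ℕ)
    (J R Q : Matrix (Fin n) (Fin n) ℝ) (F P : Matrix (Fin n) (Fin m) ℝ)
    (D : Matrix (Fin m) (Fin m) ℝ)
    (hJ : Jᵀ = -J) (hQ : Q.PosDef)
    (hK : (Ksmat n m R F P D).PosDef) :
    (-(BRmat n m ((J - R) * Q) (F - P) ((F + P)ᵀ * Q) D Q)).PosDef := by
  have hR : R.IsSymm := by simpa using (isHermitian_fromBlocks_iff.1 hK.1).1
  have hQs : Qᵀ = Q := hQ.1
  have hT : IsUnit (fromBlocks Q 0 0 1 : Matrix (Fin n ⊕ (Fin m ⊕ Fin m)) _ ℝ) :=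
    (isUnit_fromBlocks_zero₂₁).2 ⟨hQ.isUnit, isUnit_one⟩
  rw [neg_BRmat_eq_conj_Ksmat F P D hJ hR.eq hQs, ← conjTranspose_eq_transpose_of_trivial]
  exact hK.conjTranspose_mul_mul_same (mulVec_injective_of_isUnit hT)

theorem stmt0 (n m : ℕ) (hn : 0 < n) (hm : 0 < m)
    (J R Q : Matrix (Fin n) (Fin n) ℝ) (F P : Matrix (Fin n) (Fin m) ℝ)
    (D : Matrix (Fin m) (Fin m) ℝ)
    (hJ : Jᵀ = -J) (hQ : Q.PosDef)
    (hK : (Ksmat n m R F P D).PosDef) :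
    (-(BRmat n m ((J - R) * Q) (F - P) ((F + P)ᵀ * Q) D Q)).PosDef :=
  stmt0_general n m J R Q F P D hJ hQ hK
end

section
/- Let $J, R, Q \in \mathbb{R}^{n \times n}$ with $J^\top = -J$, $Q$ symmetric, $F, P \in \mathbb{R}^{n \times m}$, $D \in \mathbb{R}^{m \times m}$, and suppose $K_s = \begin{pmatrix} 2R & -(F-P) & -(F+P) \\ -(F-P)^\top & I_m & -D^\top \\ -(F+P)^\top & -D & I_m \end{pmatrix} \succeq 0$. Then for every $x \in \mathbb{R}^n$ and $u \in \mathbb{R}^m$, setting $z = Qx$, $\dot{x} = (J-R)z + (F-P)u$ and $y = (F+P)^\top z + Du$, one has $2\, x^\top Q \dot{x} \leq \|u\|^2 - \|y\|^2$. -/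
/-!
Put `v = (Qx, u, y)`. Expanding `vᵀ K_s v` and eliminating `y ⬝ y` through the output equation
`y = (F + P)ᵀ Qx + D u` leaves exactly `‖u‖² - ‖y‖² - 2 (Qx)ᵀ ẋ`, once the skew part `J`
drops out of `(Qx)ᵀ ẋ`; since `Q` is symmetric, `xᵀ Q ẋ = (Qx)ᵀ ẋ`, and positive
semidefiniteness of `K_s` gives the inequality.
-/

open Matrix

theorem dotProduct_mulVec_self_eq_zero_of_transpose_eq_neg {ι α : Type*} [Fintype ι]
    [CommRing α] [NoZeroDivisors α] [CharZero α] {J : Matrix ι ι α} (hJ : Jᵀ = -J)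
    (z : ι → α) : z ⬝ᵥ J *ᵥ z = 0 :=
  self_eq_neg.mp <| by
    conv_lhs => rw [← dotProduct_transpose_mulVec, hJ, neg_mulVec, dotProduct_neg]

theorem sumElim_dotProduct_Ksmat_mulVec {n m : ℕ} (R : Matrix (Fin n) (Fin n) ℝ)
    (F P : Matrix (Fin n) (Fin m) ℝ) (D : Matrix (Fin m) (Fin m) ℝ)
    (z : Fin n → ℝ) (u w : Fin m → ℝ) :
    Sum.elim z (Sum.elim u w) ⬝ᵥ Ksmat n m R F P D *ᵥ Sum.elim z (Sum.elim u w) =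
      2 * (z ⬝ᵥ R *ᵥ z) - 2 * (z ⬝ᵥ (F - P) *ᵥ u) - 2 * (z ⬝ᵥ (F + P) *ᵥ w)
        + u ⬝ᵥ u - 2 * (u ⬝ᵥ Dᵀ *ᵥ w) + w ⬝ᵥ w := by
  simp only [Ksmat, blk3, fromBlocks_mulVec, fromRows_mulVec, fromCols_mulVec_sumElim,
    Sum.elim_comp_inl, Sum.elim_comp_inr, sumElim_dotProduct_sumElim, neg_mulVec, one_mulVec,
    smul_mulVec, dotProduct_add, dotProduct_neg, dotProduct_smul, smul_eq_mul,
    dotProduct_transpose_mulVec]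
  ring

theorem scattering_supply_sub_eq_Ksmat_quadForm {n m : ℕ}
    (J R : Matrix (Fin n) (Fin n) ℝ) (F P : Matrix (Fin n) (Fin m) ℝ)
    (D : Matrix (Fin m) (Fin m) ℝ) (hJ : Jᵀ = -J) (z : Fin n → ℝ) (u : Fin m → ℝ) :
    let y := (F + P)ᵀ *ᵥ z + D *ᵥ u
    u ⬝ᵥ u - y ⬝ᵥ y - 2 * (z ⬝ᵥ ((J - R) *ᵥ z + (F - P) *ᵥ u)) =
      Sum.elim z (Sum.elim u y) ⬝ᵥ Ksmat n m R F P D *ᵥ Sum.elim z (Sum.elim u y) := by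
  intro y
  have hy : y ⬝ᵥ y = z ⬝ᵥ (F + P) *ᵥ y + u ⬝ᵥ Dᵀ *ᵥ y := by
    rw [add_dotProduct, dotProduct_comm _ y, dotProduct_transpose_mulVec, dotProduct_comm _ y,
      dotProduct_transpose_mulVec]
  clear_value y
  rw [sumElim_dotProduct_Ksmat_mulVec, dotProduct_add, sub_mulVec, dotProduct_sub,
    dotProduct_mulVec_self_eq_zero_of_transpose_eq_neg hJ, hy]
  ring

theorem stmt6 (n m : ℕ)
    (J R Q : Matrix (Fin n) (Fin n) ℝ) (F P : Matrix (Fin n) (Fin m) ℝ)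
    (D : Matrix (Fin m) (Fin m) ℝ)
    (hJ : Jᵀ = -J) (hQ : Qᵀ = Q)
    (hK : (Ksmat n m R F P D).PosSemidef)
    (x : Fin n → ℝ) (u : Fin m → ℝ) :
    let z := Q *ᵥ x
    let xdot := (J - R) *ᵥ z + (F - P) *ᵥ u
    let y := (F + P)ᵀ *ᵥ z + D *ᵥ u
    2 * (x ⬝ᵥ (Q *ᵥ xdot)) ≤ u ⬝ᵥ u - y ⬝ᵥ y := by
  intro z xdot y
  have hx : x ⬝ᵥ Q *ᵥ xdot = z ⬝ᵥ xdot := by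
    rw [← hQ, dotProduct_transpose_mulVec, dotProduct_comm]
  have hv := hK.dotProduct_mulVec_nonneg (Sum.elim z (Sum.elim u y))
  rw [star_trivial, ← scattering_supply_sub_eq_Ksmat_quadForm J R F P D hJ z u] at hv
  linarith
end

section
/- Let $X = \begin{pmatrix} X_{11} & X_{12} & X_{13} \\ X_{12}^\top & X_{22} & X_{23} \\ X_{13}^\top & X_{23}^\top & X_{33} \end{pmatrix} \succeq 0$ be a symmetric positive semidefinite block matrix with $X_{11}$ of size $n$ and $X_{22}, X_{33}$ symmetric of size $m$. Let $\alpha_2 = \max(1, \lambda_{\max}(X_{22}))$ and $\alpha_3 = \max(1, \lambda_{\max}(X_{33}))$. Then the matrix $\tilde{X} = \begin{pmatrix} X_{11} & X_{12}/\alpha_2 & X_{13}/\alpha_3 \\ X_{12}^\top/\alpha_2 & I_m & X_{23}/(\alpha_2\alpha_3) \\ X_{13}^\top/\alpha_3 & X_{23}^\top/(\alpha_2\alpha_3) & I_m \end{pmatrix}$ is positive semidefinite. -/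
/-!
Conjugating `X` by `diag(I, α₂⁻¹ I, α₃⁻¹ I)` already gives the off-diagonal blocks of `X̃`, with
diagonal blocks `X₂₂ / α₂²` and `X₃₃ / α₃²`. Since `λ_max(Xᵢᵢ) ≤ αᵢ ≤ αᵢ²`, the block-diagonal
correction `diag(0, I - X₂₂ / α₂², I - X₃₃ / α₃²)` that turns it into `X̃` is positive semidefinite.
-/

open Matrix

noncomputable section

namespace Matrix

variable {m n R : Type*} [Fintype m] [Fintype n] [Ring R] [PartialOrder R] [StarRing R]
  [AddLeftMono R]

theorem PosSemidef.fromBlocks_zero [DecidableEq m] [DecidableEq n]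
    {A : Matrix m m R} {B : Matrix n n R} (hA : A.PosSemidef) (hB : B.PosSemidef) :
    (fromBlocks A 0 0 B).PosSemidef := by
  have hA' := hA.conjTranspose_mul_mul_same (fromCols (1 : Matrix m m R) (0 : Matrix m n R))
  have hB' := hB.conjTranspose_mul_mul_same (fromCols (0 : Matrix n m R) (1 : Matrix n n R))
  convert hA'.add hB' using 1
  ext (i | i) (j | j) <;> simp [conjTranspose_fromCols_eq_fromRows_conjTranspose]

theorem PosSemidef.fromBlocks_compress [DecidableEq m] {k : Type*} [Fintype k] [DecidableEq k]
    {A : Matrix m m R} {B : Matrix m n R} {C : Matrix n m R} {D : Matrix n n R}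
    {E : Matrix k k R} (S : Matrix k n R) (hM : (fromBlocks A B C D).PosSemidef)
    (hE : (E - S * D * Sᴴ).PosSemidef) : (fromBlocks A (B * Sᴴ) (S * C) E).PosSemidef := by
  let T : Matrix (m ⊕ k) (m ⊕ n) R := fromBlocks 1 0 0 S
  convert (hM.mul_mul_conjTranspose_same T).add (PosSemidef.zero.fromBlocks_zero hE) using 1
  simp [T, fromBlocks_conjTranspose, fromBlocks_multiply, fromBlocks_add]

section Eigenvalues

open scoped MatrixOrder ComplexOrder

variable {𝕜 : Type*} [RCLike 𝕜] [DecidableEq n] {A : Matrix n n 𝕜}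

theorem IsHermitian.posSemidef_smul_one_sub_of_eigenvalues_le (hA : A.IsHermitian) {c : ℝ}
    (h : ∀ i, hA.eigenvalues i ≤ c) : (c • (1 : Matrix n n 𝕜) - A).PosSemidef := by
  have hle : A ≤ algebraMap ℝ (Matrix n n 𝕜) c := by
    refine le_algebraMap_of_spectrum_le ?_ hA
    rw [hA.spectrum_real_eq_range_eigenvalues]
    rintro _ ⟨i, rfl⟩
    exact h i
  rwa [Algebra.algebraMap_eq_smul_one] at hle

theorem IsHermitian.posSemidef_one_sub_smul_of_eigenvalues_le (hA : A.IsHermitian) {c : ℝ}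
    (hc : 0 < c) (h : ∀ i, hA.eigenvalues i ≤ c⁻¹) : (1 - c • A).PosSemidef := by
  convert (hA.posSemidef_smul_one_sub_of_eigenvalues_le h).smul hc.le using 1
  rw [smul_sub, smul_smul, mul_inv_cancel₀ hc.ne', one_smul]

end Eigenvalues

end Matrix

theorem le_max_one_ciSup_mul_self {ι : Type*} [Finite ι] (f : ι → ℝ) (i : ι) :
    f i ≤ max 1 (⨆ j, f j) * max 1 (⨆ j, f j) :=
  calc f i ≤ ⨆ j, f j := le_ciSup (Set.finite_range f).bddAbove i
    _ ≤ max 1 (⨆ j, f j) := le_max_right _ _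
    _ ≤ max 1 (⨆ j, f j) * max 1 (⨆ j, f j) :=
      le_mul_of_one_le_left (zero_le_one.trans (le_max_left _ _)) (le_max_left _ _)

theorem stmt9 (n m : ℕ)
    (X11 : Matrix (Fin n) (Fin n) ℝ) (X12 X13 : Matrix (Fin n) (Fin m) ℝ)
    (X22 X23 X33 : Matrix (Fin m) (Fin m) ℝ)
    (h22 : X22.IsHermitian) (h33 : X33.IsHermitian)
    (hX : (blk3 n m X11 X12 X13 X12ᵀ X13ᵀ X22 X23 X23ᵀ X33).PosSemidef) :
    let a2 : ℝ := max 1 (⨆ i, h22.eigenvalues i)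
    let a3 : ℝ := max 1 (⨆ i, h33.eigenvalues i)
    (blk3 n m X11 (a2⁻¹ • X12) (a3⁻¹ • X13) (a2⁻¹ • X12ᵀ) (a3⁻¹ • X13ᵀ)
      1 ((a2 * a3)⁻¹ • X23) ((a2 * a3)⁻¹ • X23ᵀ) 1).PosSemidef := by
  intro a2 a3
  let S : Matrix (Fin m ⊕ Fin m) (Fin m ⊕ Fin m) ℝ := fromBlocks (a2⁻¹ • 1) 0 0 (a3⁻¹ • 1)
  let E : Matrix (Fin m ⊕ Fin m) (Fin m ⊕ Fin m) ℝ :=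
    fromBlocks 1 ((a2 * a3)⁻¹ • X23) ((a2 * a3)⁻¹ • X23ᵀ) 1
  have hE : E - S * fromBlocks X22 X23 X23ᵀ X33 * Sᴴ =
      fromBlocks (1 - (a2 * a2)⁻¹ • X22) 0 0 (1 - (a3 * a3)⁻¹ • X33) := by
    simp [E, S, fromBlocks_transpose, fromBlocks_multiply, sub_eq_add_neg, fromBlocks_neg,
      fromBlocks_add, smul_smul, mul_comm]
  have hdiag := PosSemidef.fromBlocks_zero
    (h22.posSemidef_one_sub_smul_of_eigenvalues_le (c := (a2 * a2)⁻¹) (by positivity)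
      (by simpa only [inv_inv] using le_max_one_ciSup_mul_self h22.eigenvalues))
    (h33.posSemidef_one_sub_smul_of_eigenvalues_le (c := (a3 * a3)⁻¹) (by positivity)
      (by simpa only [inv_inv] using le_max_one_ciSup_mul_self h33.eigenvalues))
  rw [← hE] at hdiag
  convert hX.fromBlocks_compress S hdiag using 1
  simp [blk3, E, S, fromBlocks_transpose, fromCols_mul_fromBlocks, fromBlocks_mul_fromRows]
end
end

section
/- Let $(A_I, B_I, C_I, D_I)$ be a system with $I_m + D_I$ invertible, and let $X \succ 0$ be a symmetric matrix satisfying the impedance-passivity (positive-real) LMI $\begin{pmatrix} A_I^\top X + X A_I & X B_I - C_I^\top \\ B_I^\top X - C_I & -(D_I + D_I^\top) \end{pmatrix} \preceq 0$. Define the external Cayley transform $A_S = A_I - B_I (I_m + D_I)^{-1} C_I$, $B_S = \sqrt{2}\, B_I (I_m + D_I)^{-1}$, $C_S = -\sqrt{2}\,(I_m + D_I)^{-1} C_I$, $D_S = -(I_m + D_I)^{-1}(D_I - I_m)$. Then the same $X$ satisfies the scattering (bounded-real) LMI $\begin{pmatrix} A_S^\top X + X A_S & X B_S & C_S^\top \\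 B_S^\top X & -I_m & D_S^\top \\ C_S & D_S & -I_m \end{pmatrix} \preceq 0$. -/
open Matrix

/-! With `E = (1 + D_I)⁻¹`, the substitution `u = E (√2 w - C_I x)` of the impedance input by the
scattering input is the matrix `T = [[1, 0], [-E C_I, √2 E]]`, and the Cayley transform is exactly
such that the reduced bounded-real form
`[[A_Sᵀ X + X A_S + C_Sᵀ C_S, X B_S + C_Sᵀ D_S], [B_Sᵀ X + D_Sᵀ C_S, D_Sᵀ D_S - 1]]` equals
`Tᵀ M T`, with `M` the positive-real LMI matrix; so it is negative semidefinite by congruence.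
The 3 × 3 scattering LMI matrix is that form, padded by a zero row and column, minus the Gram
matrix `Hᵀ H` of `H = [-C_S, -D_S, 1]` (completing the square in the last block), hence it is
negative semidefinite too. -/

def projFirstTwo (n m R : Type*) [DecidableEq n] [DecidableEq m] [Zero R] [One R] :
    Matrix (n ⊕ m) (n ⊕ (m ⊕ m)) R :=
  fromBlocks 1 0 0 (fromCols 1 0)

section

variable {R : Type*} [CommRing R] {n m : Type*} [Fintype n] [Fintype m] [DecidableEq n]
  [DecidableEq m]

def positiveRealForm (A : Matrix n n R) (B : Matrix n m R) (C : Matrix m n R) (D : Matrix m m R)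
    (X : Matrix n n R) : Matrix (n ⊕ m) (n ⊕ m) R :=
  fromBlocks (Aᵀ * X + X * A) (X * B - Cᵀ) (Bᵀ * X - C) (-(D + Dᵀ))

def boundedRealForm (A : Matrix n n R) (B : Matrix n m R) (C : Matrix m n R) (D : Matrix m m R)
    (X : Matrix n n R) : Matrix (n ⊕ m) (n ⊕ m) R :=
  fromBlocks (Aᵀ * X + X * A + Cᵀ * C) (X * B + Cᵀ * D) (Bᵀ * X + Dᵀ * C) (Dᵀ * D - 1)

theorem mul_mul_of_mul_eq_one_sub {k : Type*} {P Q S : Matrix m m R} (h : P * Q = 1 - S)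
    (M : Matrix m k R) : P * (Q * M) = M - S * M := by
  rw [← Matrix.mul_assoc, h, Matrix.sub_mul, Matrix.one_mul]

theorem boundedRealForm_cayley {s : R} (hs : s * s = 2) (A : Matrix n n R) (B : Matrix n m R)
    (C : Matrix m n R) {D : Matrix m m R} (hD : IsUnit (1 + D)) (X : Matrix n n R) :
    boundedRealForm (A - B * (1 + D)⁻¹ * C) (s • (B * (1 + D)⁻¹)) (-(s • ((1 + D)⁻¹ * C)))
        (-((1 + D)⁻¹ * (D - 1))) X =
      (fromBlocks 1 0 (-((1 + D)⁻¹ * C)) (s • (1 + D)⁻¹))ᵀ * positiveRealForm A B C D X *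
        fromBlocks 1 0 (-((1 + D)⁻¹ * C)) (s • (1 + D)⁻¹) := by
  have hdet := (Matrix.isUnit_iff_isUnit_det _).mp hD
  set E := (1 + D)⁻¹
  have hED : E * D = 1 - E := by
    rw [eq_sub_iff_add_eq, add_comm, ← Matrix.nonsing_inv_mul _ hdet, Matrix.mul_add, Matrix.mul_one]
  have hDE : D * E = 1 - E := by
    rw [eq_sub_iff_add_eq, add_comm, ← Matrix.mul_nonsing_inv _ hdet, Matrix.add_mul, Matrix.one_mul]
  have hEDt : Eᵀ * Dᵀ = 1 - Eᵀ := by rw [← transpose_mul, hDE, transpose_sub, transpose_one]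
  simp only [positiveRealForm, boundedRealForm, fromBlocks_transpose, fromBlocks_multiply]
  -- After expanding, `D` only occurs next to `E`, and `E D = D E = 1 - E` eliminates it.
  congr 1 <;>
    simp only [transpose_mul, transpose_smul, transpose_sub, transpose_neg, transpose_one,
      transpose_zero, Matrix.mul_sub, Matrix.sub_mul, Matrix.mul_add, Matrix.add_mul,
      Matrix.mul_smul, Matrix.smul_mul, Matrix.mul_one, Matrix.one_mul, Matrix.zero_mul,
      Matrix.mul_zero, Matrix.mul_assoc, hED, hDE, hEDt, mul_mul_of_mul_eq_one_sub hDE,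
      smul_smul, hs, Matrix.neg_mul, Matrix.mul_neg, neg_neg, smul_sub, smul_add, smul_neg] <;>
    module

end

theorem neg_BRmat_eq (n m : ℕ) (A : Matrix (Fin n) (Fin n) ℝ) (B : Matrix (Fin n) (Fin m) ℝ)
    (C : Matrix (Fin m) (Fin n) ℝ) (D : Matrix (Fin m) (Fin m) ℝ) (X : Matrix (Fin n) (Fin n) ℝ) :
    -BRmat n m A B C D X =
      (projFirstTwo (Fin n) (Fin m) ℝ)ᵀ * -boundedRealForm A B C D X *
          projFirstTwo (Fin n) (Fin m) ℝ +
        (fromCols (-C) (fromCols (-D) 1))ᵀ * fromCols (-C) (fromCols (-D) 1) := by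
  simp only [BRmat, blk3, boundedRealForm, projFirstTwo, fromBlocks_transpose, transpose_fromCols,
    transpose_one, transpose_zero, fromBlocks_neg, fromBlocks_multiply, Matrix.mul_fromCols,
    Matrix.fromRows_mul, Matrix.mul_zero, Matrix.zero_mul, Matrix.mul_one, Matrix.one_mul, add_zero,
    zero_add]
  ext (i|i|i) (j|j|j) <;> simp

theorem posSemidef_neg_BRmat {n m : ℕ} {A : Matrix (Fin n) (Fin n) ℝ} {B : Matrix (Fin n) (Fin m) ℝ}
    {C : Matrix (Fin m) (Fin n) ℝ} {D : Matrix (Fin m) (Fin m) ℝ} {X : Matrix (Fin n) (Fin n) ℝ}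
    (h : (-boundedRealForm A B C D X).PosSemidef) : (-BRmat n m A B C D X).PosSemidef := by
  rw [neg_BRmat_eq, ← conjTranspose_eq_transpose_of_trivial,
    ← conjTranspose_eq_transpose_of_trivial]
  exact (h.conjTranspose_mul_mul_same _).add (posSemidef_conjTranspose_mul_self _)

noncomputable section

theorem stmt13_general (n m : ℕ)
    (AI : Matrix (Fin n) (Fin n) ℝ) (BI : Matrix (Fin n) (Fin m) ℝ)
    (CI : Matrix (Fin m) (Fin n) ℝ) (DI : Matrix (Fin m) (Fin m) ℝ)
    (hD : IsUnit ((1 : Matrix (Fin m) (Fin m) ℝ) + DI))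
    (X : Matrix (Fin n) (Fin n) ℝ)
    (hPR : (-(Matrix.fromBlocks (AIᵀ * X + X * AI) (X * BI - CIᵀ)
      (BIᵀ * X - CI) (-(DI + DIᵀ)))).PosSemidef) :
    let AS := AI - BI * ((1 : Matrix (Fin m) (Fin m) ℝ) + DI)⁻¹ * CI
    let BS := Real.sqrt 2 • (BI * ((1 : Matrix (Fin m) (Fin m) ℝ) + DI)⁻¹)
    let CS := -(Real.sqrt 2 • (((1 : Matrix (Fin m) (Fin m) ℝ) + DI)⁻¹ * CI))
    let DS := -(((1 : Matrix (Fin m) (Fin m) ℝ) + DI)⁻¹ * (DI - 1))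
    (-(BRmat n m AS BS CS DS X)).PosSemidef := by
  intro AS BS CS DS
  replace hPR : (-positiveRealForm AI BI CI DI X).PosSemidef := hPR
  apply posSemidef_neg_BRmat
  rw [boundedRealForm_cayley (Real.mul_self_sqrt zero_le_two) AI BI CI hD X, ← Matrix.neg_mul,
    ← Matrix.mul_neg, ← conjTranspose_eq_transpose_of_trivial]
  exact hPR.conjTranspose_mul_mul_same _

theorem stmt13 (n m : ℕ)
    (AI : Matrix (Fin n) (Fin n) ℝ) (BI : Matrix (Fin n) (Fin m) ℝ)
    (CI : Matrix (Fin m) (Fin n) ℝ) (DI : Matrix (Fin m) (Fin m) ℝ)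
    (hD : IsUnit ((1 : Matrix (Fin m) (Fin m) ℝ) + DI))
    (X : Matrix (Fin n) (Fin n) ℝ) (hX : X.PosDef)
    (hPR : (-(Matrix.fromBlocks (AIᵀ * X + X * AI) (X * BI - CIᵀ)
      (BIᵀ * X - CI) (-(DI + DIᵀ)))).PosSemidef) :
    let AS := AI - BI * ((1 : Matrix (Fin m) (Fin m) ℝ) + DI)⁻¹ * CI
    let BS := Real.sqrt 2 • (BI * ((1 : Matrix (Fin m) (Fin m) ℝ) + DI)⁻¹)
    let CS := -(Real.sqrt 2 • (((1 : Matrix (Fin m) (Fin m) ℝ) + DI)⁻¹ * CI))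
    let DS := -(((1 : Matrix (Fin m) (Fin m) ℝ) + DI)⁻¹ * (DI - 1))
    (-(BRmat n m AS BS CS DS X)).PosSemidef :=
  stmt13_general n m AI BI CI DI hD X hPR
end
end
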